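/- Occupation time estimates: let μ = α₋ δ_{−∞} + α₀ μ₀ + α₊ δ_{+∞} ∈ P(Z̄) with μ₀ ∈ P(ℤ), ε > 0, and R > R_{μ₀}(ε). For any nearest-neighbour trajectory w of length n starting at 0 with ‖ℓ(w) − μ‖ < 2^{−R}ε, the occupation times N^σ(w) = #{j ≤ n : w_j ∈ A^σ_R} satisfy |N^σ(w) − α_σ n| < 2εn for each σ ∈ {−,0,+}, and for each m ∈ {−R, −R+1, R−1, R} the occupation count N_m(w) = #{j ≤ n : w_j = m} satisfies N_m(w) < 3εn. -/

import Mathlib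

open MeasureTheory

/-- The two-point compactification `Z̄ = ℤ ∪ {−∞, +∞}` of `ℤ`:
`Sum.inl n` is the integer `n`, `Sum.inr false` is `−∞`, `Sum.inr true` is `+∞`. -/
abbrev Zbar : Type := ℤ ⊕ Bool

/-- The map `φ : Z̄ → [-1,1]`, `φ(k) = sign(k)(1 − 2^{−|k|})`, `φ(±∞) = ±1`. -/
noncomputable def phi : Zbar → ℝ
  | Sum.inr false => -1
  | Sum.inr true => 1
  | Sum.inl n => if 0 ≤ n then 1 - (2 : ℝ) ^ (-n) else -1 + (2 : ℝ) ^ n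

/-- Kantorovich–Rubinstein distance between the empirical measure of a trajectory `w`
and the measure `μ = α₋ δ_{−∞} + α₀ μ₀ + α₊ δ_{+∞} ∈ P(Z̄)`. -/
noncomputable def krDistEmp (n : ℕ) (w : ℕ → ℤ)
    (am a0 ap : ℝ) (μ₀ : Measure ℤ) : ℝ :=
  sSup {r : ℝ | ∃ f : Zbar → ℝ,
    (∀ a b : Zbar, |f a - f b| ≤ |phi a - phi b|) ∧ (∀ a, |f a| ≤ 1) ∧
    r = (1 / (n : ℝ)) * ∑ j ∈ Finset.Icc 1 n, f (Sum.inl (w j))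
          - (am * f (Sum.inr false) + a0 * ∫ z, f (Sum.inl z) ∂μ₀
              + ap * f (Sum.inr true))}

/-- `R_{μ₀}(ε) = min {R ∈ ℕ : μ₀(⟦−R+1, R−1⟧) > 1 − ε}`. -/
noncomputable def Rmu (μ₀ : Measure ℤ) (ε : ℝ) : ℕ :=
  sInf {R : ℕ | ENNReal.ofReal (1 - ε) < μ₀ {z : ℤ | -(R : ℤ) + 1 ≤ z ∧ z ≤ (R : ℤ) - 1}}

/-!
Each occupation count is `n` times the integral of `ℓ(w)` against an indicator `1_S`.
Consecutive values of `φ` at integers of modulus at most `K` are at least `2^{-K}` apart, so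
`2^{-K} 1_S` is an admissible Kantorovich–Rubinstein test function whenever each jump of `1_S`,
between some `k` and `k + 1`, has `k, k + 1 ∈ ⟦-K, K⟧`. Taking `K = R` for `A^σ_R` and
`K = R + 1` for a singleton, closeness of `ℓ(w)` to `μ` gives `|N_S - n μ(S)| < εn`
(resp. `2εn`). Finally `μ(A^σ_R)` differs from `α_σ` by at most `α₀ μ₀(ℤ ∖ A^0_R) < ε`, and
`μ({m}) ≤ μ₀(ℤ ∖ A^0_{R-1}) < ε`, by the choice of `R`.
-/

lemma phi_inl_succ_sub (k : ℤ) :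
    phi (.inl (k + 1)) - phi (.inl k) = 2 ^ (-max |k| |k + 1|) := by
  have h2 : (2 : ℝ) ≠ 0 := two_ne_zero
  rcases le_or_gt 0 k with hk | hk
  · rw [max_eq_right (by rw [abs_of_nonneg hk, abs_of_nonneg (by omega)]; omega),
      abs_of_nonneg (by omega)]
    simp only [phi, if_pos hk, if_pos (show (0 : ℤ) ≤ k + 1 by omega), neg_add,
      zpow_add₀ h2, zpow_neg_one]
    ring
  rcases eq_or_lt_of_le (show k + 1 ≤ 0 by omega) with hk1 | hk1
  · obtain rfl : k = -1 := by omega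
    norm_num [phi]
  · rw [max_eq_left (by rw [abs_of_neg hk, abs_of_neg hk1]; omega), abs_of_neg hk, neg_neg]
    simp only [phi, if_neg (not_le.2 hk), if_neg (not_le.2 hk1), zpow_add₀ h2, zpow_one]
    ring

lemma phi_inl_strictMono : StrictMono fun k : ℤ => phi (.inl k) :=
  strictMono_int_of_lt_succ fun k => sub_pos.1 <| (phi_inl_succ_sub k).symm ▸ by positivity

@[simp]
lemma phi_inl_le_phi_inl {k l : ℤ} : phi (.inl k) ≤ phi (.inl l) ↔ k ≤ l :=
  phi_inl_strictMono.le_iff_le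

@[simp]
lemma phi_inl_lt_phi_inl {k l : ℤ} : phi (.inl k) < phi (.inl l) ↔ k < l :=
  phi_inl_strictMono.lt_iff_lt

lemma neg_one_lt_phi_inl (k : ℤ) : -1 < phi (.inl k) := by
  simp only [phi]
  split_ifs with hk
  · have : (2 : ℝ) ^ (-k) ≤ 1 := zpow_le_one_of_nonpos₀ one_le_two (by omega)
    linarith
  · linarith [zpow_pos (two_pos : (0 : ℝ) < 2) k]

lemma phi_inl_lt_one (k : ℤ) : phi (.inl k) < 1 := by
  simp only [phi]
  split_ifs with hk
  · linarith [zpow_pos (two_pos : (0 : ℝ) < 2) (-k)]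
  · have : (2 : ℝ) ^ k < 1 := zpow_lt_one_of_neg₀ one_lt_two (by omega)
    linarith

lemma phi_le_or_phi_succ_le (a : Zbar) (k : ℤ) :
    phi a ≤ phi (.inl k) ∨ phi (.inl (k + 1)) ≤ phi a := by
  rcases a with l | _ | _
  · rcases le_or_gt l k with hl | hl
    · exact .inl (phi_inl_strictMono.monotone hl)
    · exact .inr (phi_inl_strictMono.monotone (by omega))
  · exact .inl (neg_one_lt_phi_inl k).le
  · exact .inr (phi_inl_lt_one _).le

lemma two_zpow_le_phi_sub_of_le_of_lt {a b : Zbar} {k : ℤ} (ha : phi a ≤ phi (.inl k))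
    (hb : phi (.inl k) < phi b) : (2 : ℝ) ^ (-max |k| |k + 1|) ≤ phi b - phi a := by
  have hb' : phi (.inl (k + 1)) ≤ phi b := (phi_le_or_phi_succ_le b k).resolve_left hb.not_ge
  linarith [phi_inl_succ_sub k]

def PhiSeparated (c : ℝ) (S : Set Zbar) : Prop :=
  ∀ a ∈ S, ∀ b ∉ S, c ≤ |phi a - phi b|

lemma PhiSeparated.inter {c : ℝ} {S T : Set Zbar} (hS : PhiSeparated c S)
    (hT : PhiSeparated c T) : PhiSeparated c (S ∩ T) := by
  rintro a ⟨haS, haT⟩ b hb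
  rcases not_and_or.1 hb with hbS | hbT
  exacts [hS a haS b hbS, hT a haT b hbT]

lemma two_zpow_neg_le_two_zpow_neg_max_abs {k K : ℤ} (h₁ : -K ≤ k) (h₂ : k + 1 ≤ K) :
    (2 : ℝ) ^ (-K) ≤ 2 ^ (-max |k| |k + 1|) :=
  zpow_le_zpow_right₀ one_le_two <| neg_le_neg <|
    max_le (abs_le.2 ⟨by omega, by omega⟩) (abs_le.2 ⟨by omega, by omega⟩)

lemma phiSeparated_Iic {k K : ℤ} (h₁ : -K ≤ k) (h₂ : k + 1 ≤ K) :
    PhiSeparated (2 ^ (-K)) (phi ⁻¹' Set.Iic (phi (.inl k))) := by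
  intro a ha b hb
  rw [abs_sub_comm]
  exact (two_zpow_neg_le_two_zpow_neg_max_abs h₁ h₂).trans <|
    (two_zpow_le_phi_sub_of_le_of_lt ha (not_le.1 hb)).trans (le_abs_self _)

lemma phiSeparated_Ioi {k K : ℤ} (h₁ : -K ≤ k) (h₂ : k + 1 ≤ K) :
    PhiSeparated (2 ^ (-K)) (phi ⁻¹' Set.Ioi (phi (.inl k))) :=
  fun _ ha _ hb => (two_zpow_neg_le_two_zpow_neg_max_abs h₁ h₂).trans <|
    (two_zpow_le_phi_sub_of_le_of_lt (not_lt.1 hb) ha).trans (le_abs_self _)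

def IsKRTest (f : Zbar → ℝ) : Prop :=
  (∀ a b, |f a - f b| ≤ |phi a - phi b|) ∧ ∀ a, |f a| ≤ 1

lemma IsKRTest.neg {f : Zbar → ℝ} (hf : IsKRTest f) : IsKRTest (-f) :=
  ⟨fun a b => by
    rw [Pi.neg_apply, Pi.neg_apply, neg_sub_neg, abs_sub_comm (phi a)]; exact hf.1 b a,
   fun a => by simpa using hf.2 a⟩

lemma PhiSeparated.isKRTest_indicator {c : ℝ} {S : Set Zbar} (hS : PhiSeparated c S)
    (hc : 0 ≤ c) (hc1 : c ≤ 1) : IsKRTest (S.indicator fun _ => c) := by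
  refine ⟨fun a b => ?_, fun a => ?_⟩
  · by_cases ha : a ∈ S <;> by_cases hb : b ∈ S
    · simp [ha, hb]
    · simpa [ha, hb, abs_of_nonneg hc] using hS a ha b hb
    · simpa [ha, hb, abs_of_nonneg hc, abs_sub_comm] using hS b hb a ha
    · simp [ha, hb]
  · by_cases ha : a ∈ S <;> simp [ha, abs_of_nonneg hc, hc1]

section KantorovichRubinstein

open scoped Finset

variable {n : ℕ} {w : ℕ → ℤ} {am a0 ap : ℝ} {μ₀ : Measure ℤ}

variable (n w am a0 ap μ₀) in
/-- `∫ f dℓ(w) - ∫ f dμ`: `krDistEmp` is its supremum over the `IsKRTest` functions. -/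
noncomputable def testGap (f : Zbar → ℝ) : ℝ :=
  (1 / (n : ℝ)) * ∑ j ∈ Finset.Icc 1 n, f (Sum.inl (w j))
    - (am * f (Sum.inr false) + a0 * ∫ z, f (Sum.inl z) ∂μ₀ + ap * f (Sum.inr true))

lemma testGap_neg (f : Zbar → ℝ) :
    testGap n w am a0 ap μ₀ (-f) = -testGap n w am a0 ap μ₀ f := by
  simp only [testGap, Pi.neg_apply, Finset.sum_neg_distrib, integral_neg]
  ring

lemma abs_testGap_le [IsFiniteMeasure μ₀] {f : Zbar → ℝ} (hf : ∀ a, |f a| ≤ 1) :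
    |testGap n w am a0 ap μ₀ f| ≤ 1 + (|am| + |a0| * μ₀.real Set.univ + |ap|) := by
  have hemp : |(1 / (n : ℝ)) * ∑ j ∈ Finset.Icc 1 n, f (Sum.inl (w j))| ≤ 1 := by
    rw [one_div_mul_eq_div, abs_div, Nat.abs_cast]
    refine div_le_one_of_le₀ ?_ n.cast_nonneg
    calc _ ≤ ∑ j ∈ Finset.Icc 1 n, |f (Sum.inl (w j))| := Finset.abs_sum_le_sum_abs _ _
      _ ≤ ∑ _j ∈ Finset.Icc 1 n, (1 : ℝ) := Finset.sum_le_sum fun j _ => hf _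
      _ = n := by simp
  have hint : |∫ z, f (Sum.inl z) ∂μ₀| ≤ μ₀.real Set.univ := by
    simpa using norm_integral_le_of_norm_le_const (μ := μ₀) (f := fun z => f (.inl z))
      (.of_forall fun z => hf (.inl z))
  have hm : |am * f (Sum.inr false)| ≤ |am| := by
    rw [abs_mul]; exact mul_le_of_le_one_right (abs_nonneg _) (hf _)
  have h0 : |a0 * ∫ z, f (Sum.inl z) ∂μ₀| ≤ |a0| * μ₀.real Set.univ := by
    rw [abs_mul]; exact mul_le_mul_of_nonneg_left hint (abs_nonneg _)
  have hp : |ap * f (Sum.inr true)| ≤ |ap| := by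
    rw [abs_mul]; exact mul_le_of_le_one_right (abs_nonneg _) (hf _)
  have := abs_add_three (am * f (Sum.inr false)) (a0 * ∫ z, f (Sum.inl z) ∂μ₀)
    (ap * f (Sum.inr true))
  exact (abs_sub _ _).trans (by linarith)

lemma testGap_le_krDistEmp [IsFiniteMeasure μ₀] {f : Zbar → ℝ} (hf : IsKRTest f) :
    testGap n w am a0 ap μ₀ f ≤ krDistEmp n w am a0 ap μ₀ :=
  le_csSup ⟨_, by rintro _ ⟨g, -, hg, rfl⟩; exact (le_abs_self _).trans (abs_testGap_le hg)⟩
    ⟨f, hf.1, hf.2, rfl⟩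

lemma abs_testGap_le_krDistEmp [IsFiniteMeasure μ₀] {f : Zbar → ℝ} (hf : IsKRTest f) :
    |testGap n w am a0 ap μ₀ f| ≤ krDistEmp n w am a0 ap μ₀ :=
  abs_le'.2 ⟨testGap_le_krDistEmp hf, testGap_neg f ▸ testGap_le_krDistEmp hf.neg⟩

variable (am a0 ap μ₀) in
/-- `μ(S)` for `μ = α₋ δ_{−∞} + α₀ μ₀ + α₊ δ_{+∞}`. -/
noncomputable def zbarMass (S : Set Zbar) : ℝ :=
  am * S.indicator 1 (Sum.inr false) + a0 * μ₀.real (Sum.inl ⁻¹' S)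
    + ap * S.indicator 1 (Sum.inr true)

open scoped Classical in
lemma testGap_indicator (S : Set Zbar) (c : ℝ) :
    testGap n w am a0 ap μ₀ (S.indicator fun _ => c) =
      c * (#{j ∈ Finset.Icc 1 n | Sum.inl (w j) ∈ S} / n - zbarMass am a0 ap μ₀ S) := by
  have hint : ∫ z, S.indicator (fun _ => c) (Sum.inl z) ∂μ₀ = μ₀.real (Sum.inl ⁻¹' S) * c := by
    simp_rw [← Set.indicator_comp_right Sum.inl]
    exact integral_indicator_const c (.of_discrete)
  rw [testGap, hint]
  simp only [zbarMass, Set.indicator_apply, ← Finset.sum_filter,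
    Finset.sum_const, nsmul_eq_mul, Pi.one_apply]
  split_ifs <;> ring

lemma abs_card_sub_zbarMass_lt [IsFiniteMeasure μ₀] (hn : 0 < n) {S : Set Zbar} {p : ℤ → Prop}
    [DecidablePred p] (hp : ∀ k, Sum.inl k ∈ S ↔ p k) {c δ : ℝ} (hS : PhiSeparated c S)
    (hc : 0 < c) (hc1 : c ≤ 1) (hclose : krDistEmp n w am a0 ap μ₀ < c * δ) :
    |(#{j ∈ Finset.Icc 1 n | p (w j)} : ℝ) - zbarMass am a0 ap μ₀ S * n| < δ * n := by
  classical
  have h := (abs_testGap_le_krDistEmp (hS.isKRTest_indicator hc.le hc1)).trans_lt hclose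
  rw [testGap_indicator, abs_mul, abs_of_pos hc, mul_lt_mul_iff_right₀ hc,
    Finset.filter_congr fun j _ => hp (w j)] at h
  have hn' : (0 : ℝ) < n := by exact_mod_cast hn
  calc _ = |((#{j ∈ Finset.Icc 1 n | p (w j)} : ℝ) / n - zbarMass am a0 ap μ₀ S) * n| := by
        rw [sub_mul, div_mul_cancel₀ _ hn'.ne']
    _ = |(#{j ∈ Finset.Icc 1 n | p (w j)} : ℝ) / n - zbarMass am a0 ap μ₀ S| * n := by
        rw [abs_mul, abs_of_pos hn']
    _ < δ * n := mul_lt_mul_of_pos_right h hn'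

end KantorovichRubinstein

section CentralBlock

variable {μ₀ : Measure ℤ} [IsProbabilityMeasure μ₀] {ε : ℝ} {R : ℕ}

lemma ofReal_one_sub_lt_measure_Icc (hε : 0 < ε) (hR : Rmu μ₀ ε ≤ R) :
    ENNReal.ofReal (1 - ε) < μ₀ (Set.Icc (-(R : ℤ) + 1) (R - 1)) := by
  have hmono : Monotone fun R : ℕ => Set.Icc (-(R : ℤ) + 1) (R - 1) :=
    fun _ _ h => Set.Icc_subset_Icc (by omega) (by omega)
  have hne :
      {R : ℕ | ENNReal.ofReal (1 - ε) < μ₀ (Set.Icc (-(R : ℤ) + 1) (R - 1))}.Nonempty := by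
    have hU : ⋃ R : ℕ, Set.Icc (-(R : ℤ) + 1) (R - 1) = Set.univ :=
      Set.eq_univ_of_forall fun z => Set.mem_iUnion.2 ⟨z.natAbs + 1, by
        simp only [Set.mem_Icc, Nat.cast_add, Nat.cast_one]; omega⟩
    have ht := tendsto_measure_iUnion_atTop (μ := μ₀) hmono
    rw [hU, measure_univ] at ht
    exact (ht.eventually (eventually_gt_nhds (ENNReal.ofReal_lt_one.2 (by linarith)))).exists
  exact (Nat.sInf_mem hne).trans_le (measure_mono (hmono hR))

lemma one_sub_lt_measureReal_Icc (hε : 0 < ε) (hR : Rmu μ₀ ε ≤ R) :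
    1 - ε < μ₀.real (Set.Icc (-(R : ℤ) + 1) (R - 1)) := by
  rcases lt_or_ge (1 - ε) 0 with h | h
  · exact h.trans_le measureReal_nonneg
  · exact (ENNReal.ofReal_lt_iff_lt_toReal h (measure_ne_top _ _)).1
      (ofReal_one_sub_lt_measure_Icc hε hR)

lemma measureReal_lt_of_disjoint_Icc (hε : 0 < ε) (hR : Rmu μ₀ ε ≤ R) {s : Set ℤ}
    (hs : Disjoint s (Set.Icc (-(R : ℤ) + 1) (R - 1))) : μ₀.real s < ε := by
  have := measureReal_union (μ := μ₀) hs (.of_discrete)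
  linarith [one_sub_lt_measureReal_Icc hε hR,
    measureReal_le_one (μ := μ₀) (s := s ∪ Set.Icc (-(R : ℤ) + 1) (R - 1))]

end CentralBlock

lemma abs_mul_mul_lt {a t ε x : ℝ} (ha : |a| ≤ 1) (ht : |t| < ε) (hx : 0 < x) :
    |a * t * x| < ε * x := by
  rw [abs_mul, abs_mul, abs_of_pos hx]
  exact mul_lt_mul_of_pos_right ((mul_le_of_le_one_left (abs_nonneg t) ha).trans_lt ht) hx

section Occupation

open scoped Finset

variable {n : ℕ} {w : ℕ → ℤ} {am a0 ap : ℝ} {μ₀ : Measure ℤ} [IsProbabilityMeasure μ₀] {ε : ℝ}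
  {R : ℕ}

lemma occupation_lower_estimate (hε : 0 < ε) (hR : Rmu μ₀ ε < R) (hn : 0 < n)
    (ha0 : |a0| ≤ 1) (hclose : krDistEmp n w am a0 ap μ₀ < 2 ^ (-(R : ℤ)) * ε) :
    |(#{j ∈ Finset.Icc 1 n | w j ≤ -(R : ℤ)} : ℝ) - am * n| < 2 * ε * n := by
  set S := phi ⁻¹' Set.Iic (phi (.inl (-R)))
  have hp (k : ℤ) : Sum.inl k ∈ S ↔ k ≤ -(R : ℤ) := phi_inl_le_phi_inl
  have h := abs_card_sub_zbarMass_lt hn hp (phiSeparated_Iic le_rfl (by omega)) (by positivity)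
    (zpow_le_one_of_nonpos₀ one_le_two (by omega)) hclose
  set t := μ₀.real {k : ℤ | k ≤ -(R : ℤ)}
  have hmass : zbarMass am a0 ap μ₀ S * n - am * n = a0 * t * n := by
    rw [zbarMass, show Sum.inl ⁻¹' S = {k : ℤ | k ≤ -(R : ℤ)} from Set.ext hp,
      Set.indicator_of_mem (show Sum.inr false ∈ S from (neg_one_lt_phi_inl _).le),
      Set.indicator_of_notMem (show Sum.inr true ∉ S from (phi_inl_lt_one _).not_ge)]
    simp only [Pi.one_apply]
    ring
  have ht : t < ε := measureReal_lt_of_disjoint_Icc hε hR.le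
    (Set.disjoint_left.2 fun z (hz : z ≤ -(R : ℤ)) (hz' : -(R : ℤ) + 1 ≤ z ∧ z ≤ R - 1) => by
      omega)
  have hn' : (0 : ℝ) < n := by exact_mod_cast hn
  calc _ ≤ _ := abs_sub_le _ (zbarMass am a0 ap μ₀ S * n) _
    _ < ε * n + ε * n := by
        rw [hmass]
        exact add_lt_add h (abs_mul_mul_lt ha0 (by rwa [abs_of_nonneg measureReal_nonneg]) hn')
    _ = 2 * ε * n := by ring

lemma occupation_central_estimate (hε : 0 < ε) (hR : Rmu μ₀ ε < R) (hn : 0 < n)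
    (ha0 : |a0| ≤ 1) (hclose : krDistEmp n w am a0 ap μ₀ < 2 ^ (-(R : ℤ)) * ε) :
    |(#{j ∈ Finset.Icc 1 n | -(R : ℤ) + 1 ≤ w j ∧ w j ≤ (R : ℤ) - 1} : ℝ) - a0 * n|
      < 2 * ε * n := by
  set S := phi ⁻¹' Set.Ioi (phi (.inl (-R))) ∩ phi ⁻¹' Set.Iic (phi (.inl (R - 1)))
  have hp (k : ℤ) : Sum.inl k ∈ S ↔ -(R : ℤ) + 1 ≤ k ∧ k ≤ (R : ℤ) - 1 := by
    simp only [S, Set.mem_inter_iff, Set.mem_preimage, Set.mem_Ioi, Set.mem_Iic,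
      phi_inl_lt_phi_inl, phi_inl_le_phi_inl]
    omega
  have hS : PhiSeparated (2 ^ (-(R : ℤ))) S :=
    (phiSeparated_Ioi le_rfl (by omega)).inter (phiSeparated_Iic (by omega) (by omega))
  have h := abs_card_sub_zbarMass_lt hn hp hS (by positivity)
    (zpow_le_one_of_nonpos₀ one_le_two (by omega)) hclose
  set t := μ₀.real {k : ℤ | -(R : ℤ) + 1 ≤ k ∧ k ≤ (R : ℤ) - 1}
  have hmass : zbarMass am a0 ap μ₀ S * n - a0 * n = a0 * (t - 1) * n := by
    rw [zbarMass, show Sum.inl ⁻¹' S = {k : ℤ | -(R : ℤ) + 1 ≤ k ∧ k ≤ (R : ℤ) - 1} from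
      Set.ext hp, Set.indicator_of_notMem (show Sum.inr false ∉ S from
      fun h => (neg_one_lt_phi_inl _).not_ge h.1.le), Set.indicator_of_notMem
      (show Sum.inr true ∉ S from fun h => (phi_inl_lt_one _).not_ge h.2)]
    ring
  have ht : |t - 1| < ε := by
    have : 1 - ε < t := one_sub_lt_measureReal_Icc hε hR.le
    rw [abs_sub_comm, abs_of_nonneg (sub_nonneg.2 measureReal_le_one)]
    linarith
  have hn' : (0 : ℝ) < n := by exact_mod_cast hn
  calc _ ≤ _ := abs_sub_le _ (zbarMass am a0 ap μ₀ S * n) _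
    _ < ε * n + ε * n := by rw [hmass]; exact add_lt_add h (abs_mul_mul_lt ha0 ht hn')
    _ = 2 * ε * n := by ring

lemma occupation_upper_estimate (hε : 0 < ε) (hR : Rmu μ₀ ε < R) (hn : 0 < n)
    (ha0 : |a0| ≤ 1) (hclose : krDistEmp n w am a0 ap μ₀ < 2 ^ (-(R : ℤ)) * ε) :
    |(#{j ∈ Finset.Icc 1 n | (R : ℤ) ≤ w j} : ℝ) - ap * n| < 2 * ε * n := by
  set S := phi ⁻¹' Set.Ioi (phi (.inl (R - 1)))
  have hp (k : ℤ) : Sum.inl k ∈ S ↔ (R : ℤ) ≤ k := phi_inl_lt_phi_inl.trans Int.sub_one_lt_iff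
  have h := abs_card_sub_zbarMass_lt hn hp (phiSeparated_Ioi (by omega) (by omega))
    (by positivity) (zpow_le_one_of_nonpos₀ one_le_two (by omega)) hclose
  set t := μ₀.real {k : ℤ | (R : ℤ) ≤ k}
  have hmass : zbarMass am a0 ap μ₀ S * n - ap * n = a0 * t * n := by
    rw [zbarMass, show Sum.inl ⁻¹' S = {k : ℤ | (R : ℤ) ≤ k} from Set.ext hp,
      Set.indicator_of_notMem (show Sum.inr false ∉ S from (neg_one_lt_phi_inl _).not_gt),
      Set.indicator_of_mem (show Sum.inr true ∈ S from phi_inl_lt_one _)]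
    simp only [Pi.one_apply]
    ring
  have ht : t < ε := measureReal_lt_of_disjoint_Icc hε hR.le
    (Set.disjoint_left.2 fun z (hz : (R : ℤ) ≤ z) (hz' : -(R : ℤ) + 1 ≤ z ∧ z ≤ R - 1) => by
      omega)
  have hn' : (0 : ℝ) < n := by exact_mod_cast hn
  calc _ ≤ _ := abs_sub_le _ (zbarMass am a0 ap μ₀ S * n) _
    _ < ε * n + ε * n := by
        rw [hmass]
        exact add_lt_add h (abs_mul_mul_lt ha0 (by rwa [abs_of_nonneg measureReal_nonneg]) hn')
    _ = 2 * ε * n := by ring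

lemma occupation_boundary_estimate (hε : 0 < ε) (hR : Rmu μ₀ ε < R) (hn : 0 < n)
    (ha0 : |a0| ≤ 1) (hclose : krDistEmp n w am a0 ap μ₀ < 2 ^ (-(R : ℤ)) * ε) {m : ℤ}
    (hm : -(R : ℤ) ≤ m ∧ m ≤ R) (hm' : m ≤ -(R : ℤ) + 1 ∨ (R : ℤ) - 1 ≤ m) :
    (#{j ∈ Finset.Icc 1 n | w j = m} : ℝ) < 3 * ε * n := by
  set S := phi ⁻¹' Set.Ioi (phi (.inl (m - 1))) ∩ phi ⁻¹' Set.Iic (phi (.inl m))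
  have hp (k : ℤ) : Sum.inl k ∈ S ↔ k = m := by
    simp only [S, Set.mem_inter_iff, Set.mem_preimage, Set.mem_Ioi, Set.mem_Iic,
      phi_inl_lt_phi_inl, phi_inl_le_phi_inl]
    omega
  have hS : PhiSeparated (2 ^ (-((R : ℤ) + 1))) S :=
    (phiSeparated_Ioi (by omega) (by omega)).inter (phiSeparated_Iic (by omega) (by omega))
  have hclose' : krDistEmp n w am a0 ap μ₀ < 2 ^ (-((R : ℤ) + 1)) * (2 * ε) :=
    hclose.trans_eq (by rw [neg_add, zpow_add₀ two_ne_zero, zpow_neg_one]; ring)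
  have h := abs_card_sub_zbarMass_lt hn hp hS (by positivity)
    (zpow_le_one_of_nonpos₀ one_le_two (by omega)) hclose'
  set t := μ₀.real {k : ℤ | k = m}
  have hmass : zbarMass am a0 ap μ₀ S * n = a0 * t * n := by
    rw [zbarMass, show Sum.inl ⁻¹' S = {k : ℤ | k = m} from Set.ext hp,
      Set.indicator_of_notMem (show Sum.inr false ∉ S from
      fun h => (neg_one_lt_phi_inl _).not_ge h.1.le), Set.indicator_of_notMem
      (show Sum.inr true ∉ S from fun h => (phi_inl_lt_one _).not_ge h.2)]
    ring
  -- `m ∉ A⁰_{R-1}`, and `R - 1` is still at least `R_{μ₀}(ε)`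
  have ht : t < ε := measureReal_lt_of_disjoint_Icc (R := R - 1) hε (by omega)
    (Set.disjoint_left.2 fun z (hz : z = m)
      (hz' : -((R - 1 : ℕ) : ℤ) + 1 ≤ z ∧ z ≤ ((R - 1 : ℕ) : ℤ) - 1) => by omega)
  have hn' : (0 : ℝ) < n := by exact_mod_cast hn
  have hmass_lt := abs_mul_mul_lt ha0 (by rwa [abs_of_nonneg measureReal_nonneg]) hn'
  rw [← hmass] at hmass_lt
  linarith [le_abs_self ((#{j ∈ Finset.Icc 1 n | w j = m} : ℝ) - zbarMass am a0 ap μ₀ S * n),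
    le_abs_self (zbarMass am a0 ap μ₀ S * n)]

end Occupation

theorem occupation_time_estimates_general
    (am a0 ap : ℝ) (ham : 0 ≤ am) (ha0 : 0 ≤ a0) (hap : 0 ≤ ap)
    (hsum : am + a0 + ap = 1)
    (μ₀ : Measure ℤ) [IsProbabilityMeasure μ₀] (ε : ℝ) (hε : 0 < ε)
    (R : ℕ) (hR : Rmu μ₀ ε < R)
    (n : ℕ) (hn : 1 ≤ n) (w : ℕ → ℤ)
    (hclose : krDistEmp n w am a0 ap μ₀ < (2 : ℝ) ^ (-(R : ℤ)) * ε) :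
    |(((Finset.Icc 1 n).filter (fun j => w j ≤ -(R : ℤ))).card : ℝ) - am * n|
        < 2 * ε * n ∧
    |(((Finset.Icc 1 n).filter
        (fun j => -(R : ℤ) + 1 ≤ w j ∧ w j ≤ (R : ℤ) - 1)).card : ℝ) - a0 * n|
        < 2 * ε * n ∧
    |(((Finset.Icc 1 n).filter (fun j => (R : ℤ) ≤ w j)).card : ℝ) - ap * n|
        < 2 * ε * n ∧
    ∀ m ∈ ({-(R : ℤ), -(R : ℤ) + 1, (R : ℤ) - 1, (R : ℤ)} : Set ℤ),
      (((Finset.Icc 1 n).filter (fun j => w j = m)).card : ℝ) < 3 * ε * n := by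
  have ha0' : |a0| ≤ 1 := abs_le.2 ⟨by linarith, by linarith⟩
  refine ⟨occupation_lower_estimate hε hR hn ha0' hclose,
    occupation_central_estimate hε hR hn ha0' hclose,
    occupation_upper_estimate hε hR hn ha0' hclose,
    fun m hm => occupation_boundary_estimate hε hR hn ha0' hclose ?_ ?_⟩ <;>
  · simp only [Set.mem_insert_iff, Set.mem_singleton_iff] at hm
    omega

/-- Occupation time estimates for a trajectory whose empirical measure is `2^{-R}ε`-close to
`μ = α₋ δ_{−∞} + α₀ μ₀ + α₊ δ_{+∞}`. -/
theorem occupation_time_estimates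
    (am a0 ap : ℝ) (ham : 0 ≤ am) (ha0 : 0 ≤ a0) (hap : 0 ≤ ap)
    (hsum : am + a0 + ap = 1)
    (μ₀ : Measure ℤ) [IsProbabilityMeasure μ₀] (ε : ℝ) (hε : 0 < ε)
    (R : ℕ) (hR : Rmu μ₀ ε < R)
    (n : ℕ) (hn : 1 ≤ n) (w : ℕ → ℤ) (hw0 : w 1 = 0)
    (hstep : ∀ j, 1 ≤ j → j < n → (w (j + 1) - w j = 1 ∨ w (j + 1) - w j = -1))
    (hclose : krDistEmp n w am a0 ap μ₀ < (2 : ℝ) ^ (-(R : ℤ)) * ε) :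
    |(((Finset.Icc 1 n).filter (fun j => w j ≤ -(R : ℤ))).card : ℝ) - am * n|
        < 2 * ε * n ∧
    |(((Finset.Icc 1 n).filter
        (fun j => -(R : ℤ) + 1 ≤ w j ∧ w j ≤ (R : ℤ) - 1)).card : ℝ) - a0 * n|
        < 2 * ε * n ∧
    |(((Finset.Icc 1 n).filter (fun j => (R : ℤ) ≤ w j)).card : ℝ) - ap * n|
        < 2 * ε * n ∧
    ∀ m ∈ ({-(R : ℤ), -(R : ℤ) + 1, (R : ℤ) - 1, (R : ℤ)} : Set ℤ),
      (((Finset.Icc 1 n).filter (fun j => w j = m)).card : ℝ) < 3 * ε * n :=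
  occupation_time_estimates_general am a0 ap ham ha0 hap hsum μ₀ ε hε R hR n hn w hclose
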